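/- arXiv:2012.10316 — 4 statements merged into one kernel-verified Lean document; each statement's English description precedes it below -/
import Mathlib

section
/- Let f, g : [a,b] → ℝ be càdlàg functions such that sup_{x∈[a,b]} |f(x) + ∫_a^x g(u) du| ≤ K for some K < ∞, and suppose that whenever f(x) ≠ 0 we have f(x)·g(x) > 0 for x ∈ [a,b]. Then sup_{x∈[a,b]} |∫_a^x g(u) du| ≤ K and sup_{x∈[a,b]} |f(x)| ≤ 2K. -/
open MeasureTheory Set Filter

private lemma cadlag_aux (a b K : ℝ) (hab : a ≤ b) (hK : 0 ≤ K) (f g : ℝ → ℝ)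
    (hg : IntegrableOn g (Icc a b))
    (hbound : ∀ x ∈ Icc a b, f x + ∫ u in a..x, g u ≤ K)
    (hsign : ∀ x ∈ Icc a b, f x ≠ 0 → 0 < f x * g x) :
    ∀ x ∈ Icc a b, (∫ u in a..x, g u) ≤ K := by
  set G : ℝ → ℝ := fun x => ∫ u in a..x, g u with hG
  have hGcont : ContinuousOn G (Icc a b) := by
    rw [hG, ← uIcc_of_le hab]
    exact intervalIntegral.continuousOn_primitive_interval (by rwa [uIcc_of_le hab])
  intro x hx
  by_contra hcon
  push_neg at hcon
  -- the set of points up to x where G ≤ K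
  set A : Set ℝ := Icc a x ∩ G ⁻¹' (Iic K) with hA
  have hsub : Icc a x ⊆ Icc a b := Icc_subset_Icc le_rfl hx.2
  have hAclosed : IsClosed A :=
    (hGcont.mono hsub).preimage_isClosed_of_isClosed isClosed_Icc isClosed_Iic
  have haA : a ∈ A := by
    constructor
    · exact ⟨le_rfl, hx.1⟩
    · simp only [mem_preimage, mem_Iic, hG]
      rw [intervalIntegral.integral_same]
      exact hK
  have hAne : A.Nonempty := ⟨a, haA⟩
  have hAbdd : BddAbove A := ⟨x, fun y hy => hy.1.2⟩
  set d := sSup A with hd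
  have hdA : d ∈ A := hAclosed.csSup_mem hAne hAbdd
  have had : a ≤ d := hdA.1.1
  have hdx : d ≤ x := hdA.1.2
  have hGd : G d ≤ K := hdA.2
  -- on (d, x], g < 0
  have hgneg : ∀ y ∈ Ioc d x, g y < 0 := by
    intro y hy
    have hyab : y ∈ Icc a b := ⟨had.trans hy.1.le, hy.2.trans hx.2⟩
    have hGy : K < G y := by
      by_contra hGy
      push_neg at hGy
      have : y ∈ A := ⟨⟨had.trans hy.1.le, hy.2⟩, hGy⟩
      exact absurd (le_csSup hAbdd this) (not_le.mpr hy.1)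
    have hfy : f y < 0 := by
      have := hbound y hyab
      linarith
    have := hsign y hyab (ne_of_lt hfy)
    nlinarith
  -- integrability pieces
  have hint1 : IntervalIntegrable g volume a d := by
    apply MeasureTheory.IntegrableOn.intervalIntegrable
    rw [uIcc_of_le had]
    exact hg.mono_set (Icc_subset_Icc le_rfl (hdx.trans hx.2))
  have hint2 : IntervalIntegrable g volume d x := by
    apply MeasureTheory.IntegrableOn.intervalIntegrable
    rw [uIcc_of_le hdx]
    exact hg.mono_set (Icc_subset_Icc had hx.2)
  have hsplit : G d + ∫ u in d..x, g u = G x :=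
    intervalIntegral.integral_add_adjacent_intervals hint1 hint2
  have hnonpos : (∫ u in d..x, g u) ≤ 0 := by
    rw [intervalIntegral.integral_of_le hdx]
    apply setIntegral_nonpos measurableSet_Ioc
    exact fun y hy => (hgneg y hy).le
  have : G x ≤ K := by linarith
  exact absurd this (not_le.mpr hcon)

/-- Technical lemma (Berestycki–Berestycki–Limic, Lemma 10): if `f, g : [a,b] → ℝ` are
càdlàg, `g` is integrable on `[a,b]`, `sup_{x∈[a,b]} |f(x) + ∫_a^x g| ≤ K`, and
`f(x) g(x) > 0` whenever `f(x) ≠ 0`, then `sup |∫_a^x g| ≤ K` and `sup |f| ≤ 2K`. -/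
theorem cadlag_technical_lemma (a b K : ℝ) (hab : a ≤ b) (f g : ℝ → ℝ)
    (hg : IntegrableOn g (Icc a b))
    -- f is right-continuous on [a,b)
    (hf_right : ∀ x ∈ Ico a b, ContinuousWithinAt f (Ici x) x)
    -- f has left limits on (a,b]
    (hf_left : ∀ x ∈ Ioc a b, ∃ l : ℝ, Tendsto f (nhdsWithin x (Iio x)) (nhds l))
    -- g is right-continuous on [a,b)
    (hg_right : ∀ x ∈ Ico a b, ContinuousWithinAt g (Ici x) x)
    -- g has left limits on (a,b]
    (hg_left : ∀ x ∈ Ioc a b, ∃ l : ℝ, Tendsto g (nhdsWithin x (Iio x)) (nhds l))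
    (hbound : ∀ x ∈ Icc a b, |f x + ∫ u in a..x, g u| ≤ K)
    (hsign : ∀ x ∈ Icc a b, f x ≠ 0 → 0 < f x * g x) :
    (∀ x ∈ Icc a b, |∫ u in a..x, g u| ≤ K) ∧ ∀ x ∈ Icc a b, |f x| ≤ 2 * K := by
  have hK : 0 ≤ K := le_trans (abs_nonneg _) (hbound a ⟨le_rfl, hab⟩)
  have h1 : ∀ x ∈ Icc a b, (∫ u in a..x, g u) ≤ K := by
    apply cadlag_aux a b K hab hK f g hg
    · intro x hx; exact le_trans (le_abs_self _) (hbound x hx)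
    · exact hsign
  have h2 : ∀ x ∈ Icc a b, (∫ u in a..x, (-g) u) ≤ K := by
    apply cadlag_aux a b K hab hK (-f) (-g) hg.neg
    · intro x hx
      have h := hbound x hx
      have : (∫ u in a..x, (-g) u) = -∫ u in a..x, g u := intervalIntegral.integral_neg
      rw [this]
      simp only [Pi.neg_apply]
      have := neg_abs_le (f x + ∫ u in a..x, g u)
      linarith
    · intro x hx hfx
      have : f x ≠ 0 := by simpa using hfx
      have := hsign x hx this
      simp only [Pi.neg_apply]
      nlinarith
  have hGabs : ∀ x ∈ Icc a b, |∫ u in a..x, g u| ≤ K := by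
    intro x hx
    rw [abs_le]
    refine ⟨?_, h1 x hx⟩
    have := h2 x hx
    simp only [Pi.neg_apply] at this
    rw [intervalIntegral.integral_neg] at this
    linarith
  refine ⟨hGabs, fun x hx => ?_⟩
  have hb := hbound x hx
  have hG := hGabs x hx
  rw [abs_le] at hb hG ⊢
  constructor <;> linarith
end

section
/- Let T be a nonnegative random variable, ζ an independent Exponential(λ) random variable with λ > 0, E an event of probability p < 1/2 independent of ζ, and T̂, T̃ independent copies of T, all mutually independent, such that T has the same distribution as ζ + 1_E·(T̂ + T̃). If E[T^j] < ∞ for all j < k, then E[T^k] < ∞. -/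
/-!
Work with `X = ofReal ∘ T` and the truncations `min X n`, whose moments are finite. Taking
`k`-th moments in `X =d ζ + 1_E (T̂ + T̃)` and expanding binomially, independence splits every
mixed term into a product of moments of order `< k` (finite by hypothesis, or moments of the
exponential variable `ζ`), except for the two pure terms `E[1_E T̂ᵏ] + E[1_E T̃ᵏ] = 2 p E[Tᵏ]`.
For the truncations this gives `E[min(X, n)ᵏ] ≤ C + 2p E[min(X, n)ᵏ]` with `C` independent of `n`,
so `E[min(X, n)ᵏ] ≤ C / (1 - 2p)` because `2p < 1`, and monotone convergence bounds `E[Xᵏ]`.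
-/

open MeasureTheory ProbabilityTheory Set

open scoped ENNReal

lemma min_add_le_add_min {α : Type*} [AddCommMonoid α] [LinearOrder α] [CanonicallyOrderedAdd α]
    (a b c : α) : min (a + b) c ≤ a + min b c := by
  rcases le_total b c with h | h
  · exact (min_le_left _ _).trans (by rw [min_eq_left h])
  · exact (min_le_right _ _).trans (by rw [min_eq_right h]; exact le_add_self)

lemma min_add_le_min_add_min {α : Type*} [AddCommMonoid α] [LinearOrder α]
    [CanonicallyOrderedAdd α] (a b c : α) : min (a + b) c ≤ min a c + min b c := by
  rcases le_total a c with h | h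
  · rw [min_eq_left h]; exact min_add_le_add_min a b c
  · rw [min_eq_right h]; exact (min_le_right _ _).trans le_self_add

lemma min_add_indicator_mul_le {α : Type*} (E : Set α) (z y y' c : ℝ≥0∞) (x : α) :
    min (z + E.indicator 1 x * (y + y')) c ≤ z + E.indicator 1 x * (min y c + min y' c) := by
  by_cases hx : x ∈ E
  · simp only [indicator_of_mem hx, Pi.one_apply, one_mul]
    exact (min_add_le_add_min _ _ _).trans (add_le_add le_rfl (min_add_le_min_add_min _ _ _))
  · simp [indicator_of_notMem hx]

lemma ENNReal.le_div_of_le_add_mul {x c q : ℝ≥0∞} (hx : x ≠ ∞) (hq : q < 1)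
    (h : x ≤ c + q * x) : x ≤ c / (1 - q) := by
  rw [ENNReal.le_div_iff_mul_le (.inl (tsub_pos_of_lt hq).ne') (.inl (by simp)),
    ENNReal.mul_sub fun _ _ => hx, mul_one, tsub_le_iff_right, mul_comm]
  exact h

lemma ProbabilityTheory.iIndepFun.indepFun_prodMk₃_right {Ω ι β : Type*} [MeasurableSpace Ω]
    {μ : Measure Ω} [MeasurableSpace β] {f : ι → Ω → β} (h : iIndepFun f μ)
    (hf : ∀ i, Measurable (f i)) {i j k l : ι} (hij : i ≠ j) (hik : i ≠ k) (hil : i ≠ l) :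
    IndepFun (f i) (fun ω => (f j ω, f k ω, f l ω)) μ := by
  classical
  exact (h.indepFun_finset {i} {j, k, l} (by simp [hij, hik, hil]) hf).comp
    (measurable_pi_apply ⟨i, by simp⟩)
    ((measurable_pi_apply ⟨j, by simp⟩).prodMk ((measurable_pi_apply ⟨k, by simp⟩).prodMk
      (measurable_pi_apply ⟨l, by simp⟩)))

noncomputable section

namespace MeasureTheory

variable {Ω : Type*} [MeasurableSpace Ω] {μ : Measure Ω}

def lmoment (μ : Measure Ω) (f : Ω → ℝ≥0∞) (i : ℕ) : ℝ≥0∞ := ∫⁻ ω, f ω ^ i ∂μ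

lemma lmoment_zero [IsProbabilityMeasure μ] (f : Ω → ℝ≥0∞) : lmoment μ f 0 = 1 := by
  simp [lmoment]

lemma lmoment_mono {f g : Ω → ℝ≥0∞} (hfg : f ≤ g) (i : ℕ) : lmoment μ f i ≤ lmoment μ g i :=
  lintegral_mono fun ω => pow_le_pow_left' (hfg ω) i

lemma _root_.ProbabilityTheory.IdentDistrib.lmoment_eq {f g : Ω → ℝ≥0∞}
    (h : IdentDistrib f g μ μ) : lmoment μ f = lmoment μ g :=
  funext fun i => (h.comp (measurable_id.pow_const i)).lintegral_eq

lemma lmoment_min_natCast_lt_top [IsFiniteMeasure μ] (f : Ω → ℝ≥0∞) (n i : ℕ) :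
    lmoment μ (fun ω => min (f ω) n) i < ∞ :=
  calc lmoment μ (fun ω => min (f ω) n) i ≤ lmoment μ (fun _ => (n : ℝ≥0∞)) i :=
        lmoment_mono (fun ω => min_le_right _ _) i
    _ < ∞ := by simp [lmoment, lintegral_const, ENNReal.mul_lt_top]

lemma lmoment_eq_iSup_lmoment_min {f : Ω → ℝ≥0∞} (hf : Measurable f) (i : ℕ) :
    lmoment μ f i = ⨆ n : ℕ, lmoment μ (fun ω => min (f ω) n) i := by
  have hmono : Monotone fun (n : ℕ) ω => min (f ω) n ^ i := fun m n hmn ω =>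
    pow_le_pow_left' (min_le_min_left _ (Nat.cast_le.mpr hmn)) i
  simp only [lmoment]
  rw [← lintegral_iSup (fun n => by fun_prop) hmono]
  congr 1 with ω
  rw [← ENNReal.iSup_pow, ← inf_iSup_eq, ENNReal.iSup_natCast]
  exact congrArg (· ^ i) (inf_top_eq _).symm

lemma lmoment_indicator_mul_succ {E : Set Ω} (hE : MeasurableSet E) {f : Ω → ℝ≥0∞}
    (hf : Measurable f) (hEf : IndepFun (E.indicator (1 : Ω → ℝ≥0∞)) f μ) (K : ℕ) :
    lmoment μ (E.indicator 1 * f) (K + 1) = μ E * lmoment μ f (K + 1) := by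
  have hpow : ∀ ω,
      (E.indicator (1 : Ω → ℝ≥0∞) * f) ω ^ (K + 1) = E.indicator 1 ω * f ω ^ (K + 1) := by
    intro ω
    by_cases hω : ω ∈ E <;> simp [hω]
  have hsplit := lintegral_mul_eq_lintegral_mul_lintegral_of_indepFun''
    (f := E.indicator 1) (g := fun ω => f ω ^ (K + 1)) (measurable_one.indicator hE).aemeasurable
    (by fun_prop) (hEf.comp measurable_id (measurable_id.pow_const (K + 1)))
  rw [lmoment, lintegral_congr hpow, hsplit, lintegral_indicator_one hE, lmoment]

lemma lmoment_add_of_indepFun {f g : Ω → ℝ≥0∞} (hf : Measurable f) (hg : Measurable g)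
    (hfg : IndepFun f g μ) (k : ℕ) :
    lmoment μ (f + g) k =
      ∑ i ∈ Finset.range (k + 1), (k.choose i : ℝ≥0∞) * (lmoment μ f i * lmoment μ g (k - i)) := by
  simp_rw [lmoment, Pi.add_apply, add_pow]
  rw [lintegral_finsetSum _ fun i _ => by fun_prop]
  refine Finset.sum_congr rfl fun i _ => ?_
  have hprod := lintegral_mul_eq_lintegral_mul_lintegral_of_indepFun''
    (f := fun ω => f ω ^ i) (g := fun ω => g ω ^ (k - i)) (by fun_prop) (by fun_prop)
    (hfg.comp (measurable_id.pow_const i) (measurable_id.pow_const (k - i)))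
  rw [← hprod, ← lintegral_const_mul _ (by fun_prop)]
  congr 1 with ω
  ring

lemma lmoment_add_lt_top_of_indepFun {f g : Ω → ℝ≥0∞} (hf : Measurable f) (hg : Measurable g)
    (hfg : IndepFun f g μ) {m : ℕ} (hf_mom : ∀ i ≤ m, lmoment μ f i < ∞)
    (hg_mom : ∀ i ≤ m, lmoment μ g i < ∞) : lmoment μ (f + g) m < ∞ := by
  rw [lmoment_add_of_indepFun hf hg hfg]
  refine ENNReal.sum_lt_top.mpr fun i hi => ?_
  have hi : i ≤ m := Nat.lt_succ_iff.mp (Finset.mem_range.mp hi)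
  exact ENNReal.mul_lt_top (ENNReal.natCast_lt_top _)
    (ENNReal.mul_lt_top (hf_mom i hi) (hg_mom _ (Nat.sub_le m i)))

/-- The terms `0 < i < K + 1` of the binomial expansion of order `K + 1`. -/
def binomialCrossTerms (K : ℕ) (a b : ℕ → ℝ≥0∞) : ℝ≥0∞ :=
  ∑ i ∈ Finset.range K, ((K + 1).choose (i + 1) : ℝ≥0∞) * (a (i + 1) * b (K - i))

lemma binomialCrossTerms_mono {K : ℕ} {a a' b b' : ℕ → ℝ≥0∞} (ha : a ≤ a') (hb : b ≤ b') :
    binomialCrossTerms K a b ≤ binomialCrossTerms K a' b' := by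
  unfold binomialCrossTerms
  gcongr with i
  · exact ha _
  · exact hb _

lemma binomialCrossTerms_lt_top {K : ℕ} {a b : ℕ → ℝ≥0∞} (ha : ∀ i ≤ K, a i < ∞)
    (hb : ∀ i ≤ K, b i < ∞) : binomialCrossTerms K a b < ∞ := by
  refine ENNReal.sum_lt_top.mpr fun i hi => ?_
  have hi : i < K := Finset.mem_range.mp hi
  exact ENNReal.mul_lt_top (ENNReal.natCast_lt_top _)
    (ENNReal.mul_lt_top (ha _ (by omega)) (hb _ (by omega)))

lemma lmoment_add_succ_of_indepFun [IsProbabilityMeasure μ] {f g : Ω → ℝ≥0∞}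
    (hf : Measurable f) (hg : Measurable g) (hfg : IndepFun f g μ) (K : ℕ) :
    lmoment μ (f + g) (K + 1) = lmoment μ f (K + 1) + lmoment μ g (K + 1) +
      binomialCrossTerms K (lmoment μ f) (lmoment μ g) := by
  rw [lmoment_add_of_indepFun hf hg hfg, Finset.sum_range_succ, Finset.sum_range_succ',
    binomialCrossTerms]
  simp only [Nat.choose_self, Nat.choose_zero_right, Nat.sub_self, Nat.sub_zero, lmoment_zero,
    Nat.cast_one, one_mul, mul_one, Nat.add_sub_add_right]
  ring

lemma lmoment_ofReal_lt_top_iff_integrable {f : Ω → ℝ} (hf : AEStronglyMeasurable f μ)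
    (hf_nonneg : ∀ ω, 0 ≤ f ω) (j : ℕ) :
    lmoment μ (fun ω => ENNReal.ofReal (f ω)) j < ∞ ↔ Integrable (fun ω => f ω ^ j) μ := by
  rw [← lintegral_ofReal_ne_top_iff_integrable (f := fun ω => f ω ^ j) (hf.pow j)
    (Filter.Eventually.of_forall fun ω => pow_nonneg (hf_nonneg ω) j), lt_top_iff_ne_top, lmoment]
  simp_rw [ENNReal.ofReal_pow (hf_nonneg _)]

lemma lmoment_ofReal_lt_top_of_meas_lt_le_exp [IsFiniteMeasure μ] {ζ : Ω → ℝ}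
    (hζ : Measurable ζ) (hζ_nonneg : 0 ≤ᵐ[μ] ζ) {lam : ℝ} (hlam : 0 < lam)
    (htail : ∀ t, 0 < t → μ {ω | t < ζ ω} ≤ ENNReal.ofReal (Real.exp (-lam * t))) (j : ℕ) :
    lmoment μ (fun ω => ENNReal.ofReal (ζ ω)) j < ∞ := by
  rcases Nat.eq_zero_or_pos j with rfl | hj
  · simp [lmoment]
  have hrpow : (fun ω => ENNReal.ofReal (ζ ω) ^ j) =ᵐ[μ]
      fun ω => ENNReal.ofReal (ζ ω ^ (j : ℝ)) := by
    filter_upwards [hζ_nonneg] with ω hω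
    rw [Real.rpow_natCast, ENNReal.ofReal_pow hω]
  rw [lmoment, lintegral_congr_ae hrpow,
    lintegral_rpow_eq_lintegral_meas_lt_mul μ hζ_nonneg hζ.aemeasurable (Nat.cast_pos.mpr hj)]
  refine ENNReal.mul_lt_top ENNReal.ofReal_lt_top (lt_of_le_of_lt ?_
    ((integrableOn_rpow_mul_exp_neg_mul_rpow (p := 1) (s := (j : ℝ) - 1)
      (by linarith [(Nat.one_le_cast (α := ℝ)).mpr hj]) one_pos hlam).setLIntegral_lt_top))
  refine setLIntegral_mono' measurableSet_Ioi fun t ht => ?_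
  rw [Real.rpow_one, ENNReal.ofReal_mul (Real.rpow_nonneg (le_of_lt ht) _), mul_comm]
  gcongr
  exact htail t ht

lemma lmoment_min_le_of_identDistrib_add_indicator_mul {X Z Y Y' : Ω → ℝ≥0∞} {E : Set Ω}
    (hX : IdentDistrib X (fun ω => Z ω + E.indicator 1 ω * (Y ω + Y' ω)) μ μ) (n i : ℕ) :
    lmoment μ (fun ω => min (X ω) n) i ≤
      lmoment μ (Z + E.indicator 1 * ((fun ω => min (Y ω) n) + fun ω => min (Y' ω) n)) i := by
  have hXn := (hX.comp (u := fun x => min x (n : ℝ≥0∞)) (by fun_prop)).lmoment_eq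
  exact (congrFun hXn i).trans_le (lmoment_mono (fun ω => min_add_indicator_mul_le E _ _ _ _ ω) i)

section FirstStep

variable [IsProbabilityMeasure μ] {X Z Y Y' : Ω → ℝ≥0∞} {E : Set Ω}

theorem exists_lmoment_min_le_add_mul_self (hZ : Measurable Z) (hY : Measurable Y)
    (hY' : Measurable Y') (hE : MeasurableSet E)
    (hZ_indep : IndepFun Z (fun ω => (E.indicator (1 : Ω → ℝ≥0∞) ω, Y ω, Y' ω)) μ)
    (hE_indep : IndepFun (E.indicator (1 : Ω → ℝ≥0∞)) (fun ω => (Y ω, Y' ω)) μ)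
    (hYY' : IndepFun Y Y' μ) (hYX : IdentDistrib Y X μ μ) (hY'X : IdentDistrib Y' X μ μ)
    (hX : IdentDistrib X (fun ω => Z ω + E.indicator 1 ω * (Y ω + Y' ω)) μ μ)
    {K : ℕ} (hZ_mom : ∀ i, lmoment μ Z i < ∞) (hX_mom : ∀ i ≤ K, lmoment μ X i < ∞) :
    ∃ C < ∞, ∀ n : ℕ, lmoment μ (fun ω => min (X ω) n) (K + 1) ≤
      C + 2 * μ E * lmoment μ (fun ω => min (X ω) n) (K + 1) := by
  have hYY'_mom : ∀ m ≤ K, lmoment μ (Y + Y') m < ∞ := fun m hm =>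
    lmoment_add_lt_top_of_indepFun hY hY' hYY' (fun i hi => hYX.lmoment_eq ▸ hX_mom i (by omega))
      (fun i hi => hY'X.lmoment_eq ▸ hX_mom i (by omega))
  refine ⟨lmoment μ Z (K + 1) + μ E * binomialCrossTerms K (lmoment μ X) (lmoment μ X) +
    binomialCrossTerms K (lmoment μ Z) (lmoment μ (Y + Y')), ?_, fun n => ?_⟩
  · exact ENNReal.add_lt_top.mpr ⟨ENNReal.add_lt_top.mpr ⟨hZ_mom _,
      ENNReal.mul_lt_top (measure_lt_top μ E) (binomialCrossTerms_lt_top hX_mom hX_mom)⟩,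
      binomialCrossTerms_lt_top (fun i _ => hZ_mom i) hYY'_mom⟩
  set q := lmoment μ (fun ω => min (X ω) n)
  set Yn := fun ω => min (Y ω) n
  set Y'n := fun ω => min (Y' ω) n
  set W := E.indicator 1 * (Yn + Y'n)
  have hYn : IdentDistrib Yn (fun ω => min (X ω) n) μ μ :=
    hYX.comp (measurable_id.min measurable_const)
  have hY'n : IdentDistrib Y'n (fun ω => min (X ω) n) μ μ :=
    hY'X.comp (measurable_id.min measurable_const)
  have hZW := lmoment_add_succ_of_indepFun (f := Z) (g := W) hZ (by fun_prop)
    (hZ_indep.comp measurable_id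
      (ψ := fun p : ℝ≥0∞ × ℝ≥0∞ × ℝ≥0∞ => p.1 * (min p.2.1 n + min p.2.2 n)) (by fun_prop)) K
  have hW : lmoment μ W (K + 1) = μ E * (q (K + 1) + q (K + 1) + binomialCrossTerms K q q) := by
    rw [lmoment_indicator_mul_succ (f := Yn + Y'n) hE (by fun_prop) (hE_indep.comp measurable_id
        (ψ := fun p : ℝ≥0∞ × ℝ≥0∞ => min p.1 n + min p.2 n) (by fun_prop)),
      lmoment_add_succ_of_indepFun (f := Yn) (g := Y'n) (by fun_prop) (by fun_prop)
        (hYY'.comp (measurable_id.min measurable_const) (measurable_id.min measurable_const)),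
      hYn.lmoment_eq, hY'n.lmoment_eq]
  have hW_le : lmoment μ W ≤ lmoment μ (Y + Y') := fun m => lmoment_mono (fun ω =>
    (mul_le_of_le_one_left zero_le (indicator_le_self' (fun _ _ => zero_le) ω)).trans
      (add_le_add (min_le_left _ _) (min_le_left _ _))) m
  calc q (K + 1) ≤ lmoment μ Z (K + 1) +
        μ E * (q (K + 1) + q (K + 1) + binomialCrossTerms K q q) +
        binomialCrossTerms K (lmoment μ Z) (lmoment μ W) := by
          rw [← hW, ← hZW]; exact lmoment_min_le_of_identDistrib_add_indicator_mul hX n (K + 1)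
    _ ≤ lmoment μ Z (K + 1) +
        μ E * (q (K + 1) + q (K + 1) + binomialCrossTerms K (lmoment μ X) (lmoment μ X)) +
        binomialCrossTerms K (lmoment μ Z) (lmoment μ (Y + Y')) := by
      gcongr
      · have hq_le : q ≤ lmoment μ X := fun i => lmoment_mono (fun ω => min_le_left _ _) i
        exact binomialCrossTerms_mono hq_le hq_le
      · exact binomialCrossTerms_mono le_rfl hW_le
    _ = _ := by ring

theorem lmoment_lt_top_of_identDistrib_add_indicator_mul (hX_meas : Measurable X)
    (hZ : Measurable Z) (hY : Measurable Y) (hY' : Measurable Y') (hE : MeasurableSet E)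
    (hμE : 2 * μ E < 1) (hindep : iIndepFun ![Z, E.indicator 1, Y, Y'] μ)
    (hYX : IdentDistrib Y X μ μ) (hY'X : IdentDistrib Y' X μ μ)
    (hX : IdentDistrib X (fun ω => Z ω + E.indicator 1 ω * (Y ω + Y' ω)) μ μ)
    {k : ℕ} (hZ_mom : ∀ i, lmoment μ Z i < ∞) (hX_mom : ∀ i < k, lmoment μ X i < ∞) :
    lmoment μ X k < ∞ := by
  rcases k with _ | K
  · simp [lmoment_zero]
  have hmeas : ∀ i, Measurable (![Z, E.indicator 1, Y, Y'] i) := by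
    intro i
    fin_cases i
    exacts [hZ, measurable_one.indicator hE, hY, hY']
  obtain ⟨C, hC, hbound⟩ := exists_lmoment_min_le_add_mul_self hZ hY hY' hE
    (hindep.indepFun_prodMk₃_right hmeas (i := 0) (j := 1) (k := 2) (l := 3)
      (by decide) (by decide) (by decide))
    (hindep.indepFun_prodMk hmeas 2 3 1 (by decide) (by decide)).symm
    (hindep.indepFun (by decide : (2 : Fin 4) ≠ 3)) hYX hY'X hX hZ_mom
    fun i hi => hX_mom i (Nat.lt_succ_of_le hi)
  rw [lmoment_eq_iSup_lmoment_min hX_meas]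
  exact (iSup_le fun n => ENNReal.le_div_of_le_add_mul (lmoment_min_natCast_lt_top X n _).ne hμE
    (hbound n)).trans_lt (ENNReal.div_lt_top hC.ne (tsub_pos_of_lt hμE).ne')

end FirstStep

end MeasureTheory

end

lemma ProbabilityTheory.iIndepFun.ofReal_comp_indicator {Ω : Type*} [MeasurableSpace Ω]
    {μ : Measure Ω} {ζ Y Y' : Ω → ℝ} {E : Set Ω}
    (h : iIndepFun ![ζ, E.indicator (fun _ => (1 : ℝ)), Y, Y'] μ) :
    iIndepFun ![fun ω => ENNReal.ofReal (ζ ω), E.indicator 1, fun ω => ENNReal.ofReal (Y ω),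
      fun ω => ENNReal.ofReal (Y' ω)] μ := by
  convert h.comp (fun _ => ENNReal.ofReal) (fun _ => ENNReal.measurable_ofReal) using 1
  funext i ω
  fin_cases i
  all_goals by_cases hω : ω ∈ E <;> simp [hω]

lemma ProbabilityTheory.IdentDistrib.ofReal_add_indicator_mul {Ω : Type*} [MeasurableSpace Ω]
    {μ : Measure Ω} {T ζ Y Y' : Ω → ℝ} {E : Set Ω}
    (h : IdentDistrib T (fun ω => ζ ω + E.indicator (fun _ => (1 : ℝ)) ω * (Y ω + Y' ω)) μ μ)
    (hζ : 0 ≤ᵐ[μ] ζ) (hY : ∀ ω, 0 ≤ Y ω) (hY' : ∀ ω, 0 ≤ Y' ω) :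
    IdentDistrib (fun ω => ENNReal.ofReal (T ω)) (fun ω => ENNReal.ofReal (ζ ω) +
      E.indicator 1 ω * (ENNReal.ofReal (Y ω) + ENNReal.ofReal (Y' ω))) μ μ := by
  refine (h.comp ENNReal.measurable_ofReal).trans
    (IdentDistrib.of_ae_eq (h.aemeasurable_snd.ennreal_ofReal) ?_)
  filter_upwards [hζ] with ω (hω : 0 ≤ ζ ω)
  by_cases hωE : ω ∈ E
  · simp [hωE, ENNReal.ofReal_add, hω, hY ω, hY' ω, add_nonneg]
  · simp [hωE]

/-- First-step moment lemma: if `T ≥ 0` satisfies `T =d ζ + 1_E (T̂ + T̃)` with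
`ζ ~ Exp(λ)`, `P(E) = p < 1/2`, `T̂, T̃` independent copies of `T`, all mutually
independent, and `E[T^j] < ∞` for all `j < k`, then `E[T^k] < ∞`. -/
theorem hitting_time_kth_moment_finite
    {Ω : Type*} [MeasurableSpace Ω] (μ : Measure Ω) [IsProbabilityMeasure μ]
    (lam p : ℝ) (hlam : 0 < lam) (hp : p < 1 / 2)
    (T ζ That Ttil : Ω → ℝ) (E : Set Ω) (hE : MeasurableSet E) (hpE : (μ E).toReal = p)
    (hT : Measurable T) (hζ : Measurable ζ) (hThat : Measurable That) (hTtil : Measurable Ttil)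
    (hT_nonneg : ∀ ω, 0 ≤ T ω) (hThat_nonneg : ∀ ω, 0 ≤ That ω) (hTtil_nonneg : ∀ ω, 0 ≤ Ttil ω)
    -- ζ is Exponential(λ): survival function characterisation
    (hζ_exp : ∀ x : ℝ, 0 ≤ x → (μ {ω | x < ζ ω}).toReal = Real.exp (-lam * x))
    -- T̂ and T̃ are copies of T
    (hcopy1 : IdentDistrib That T μ μ) (hcopy2 : IdentDistrib Ttil T μ μ)
    -- ζ, 1_E, T̂, T̃ mutually independent
    (hindep : iIndepFun
      ![ζ, E.indicator (fun _ => (1 : ℝ)), That, Ttil] μ)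
    -- the distributional identity T =d ζ + 1_E (T̂ + T̃)
    (hdist : IdentDistrib T
      (fun ω => ζ ω + E.indicator (fun _ => (1 : ℝ)) ω * (That ω + Ttil ω)) μ μ)
    (k : ℕ)
    (hmom : ∀ j : ℕ, j < k → Integrable (fun ω => T ω ^ j) μ) :
    Integrable (fun ω => T ω ^ k) μ := by
  have hζ_nonneg : 0 ≤ᵐ[μ] ζ := by
    have hpos : μ {ω | 0 < ζ ω} = μ univ := by
      simpa [ENNReal.toReal_eq_one_iff] using hζ_exp 0 le_rfl
    exact ((ae_iff_measure_eq (measurableSet_lt measurable_const hζ).nullMeasurableSet).mpr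
      hpos).mono fun _ h => h.le
  have htail (t : ℝ) (ht : 0 < t) : μ {ω | t < ζ ω} ≤ ENNReal.ofReal (Real.exp (-lam * t)) := by
    rw [← hζ_exp t ht.le, ENNReal.ofReal_toReal (measure_ne_top _ _)]
  have hμE : 2 * μ E < 1 := by
    rw [← ENNReal.ofReal_toReal (measure_ne_top μ E), hpE, ← ENNReal.ofReal_ofNat 2,
      ← ENNReal.ofReal_mul zero_le_two, ENNReal.ofReal_lt_one]
    linarith
  have hmom_iff :=
    lmoment_ofReal_lt_top_iff_integrable (μ := μ) hT.aestronglyMeasurable hT_nonneg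
  exact (hmom_iff k).mp <| lmoment_lt_top_of_identDistrib_add_indicator_mul hT.ennreal_ofReal
    hζ.ennreal_ofReal hThat.ennreal_ofReal hTtil.ennreal_ofReal hE hμE
    hindep.ofReal_comp_indicator (hcopy1.comp ENNReal.measurable_ofReal)
    (hcopy2.comp ENNReal.measurable_ofReal)
    (hdist.ofReal_add_indicator_mul hζ_nonneg hThat_nonneg hTtil_nonneg)
    (lmoment_ofReal_lt_top_of_meas_lt_le_exp hζ hζ_nonneg hlam htail)
    fun j hj => (hmom_iff j).mpr (hmom j hj)
end

section
/- Let (a_{n,k}) and (x_{n,k}) be nonnegative double sequences, k ∈ ℕ, σ, θ ≥ 0 fixed, such that x_{n,j} ≤ B_j/n^{2j} for constants B_j, a_{n,k} is bounded in n for each k, and a_{n,k} ≤ x_{n,k} + ∑_{j=1}^{k} C(k,j)·(2^j σ/(n-1+θ+σ))·x_{n,k-j}·(a_{n+1,j} + a_{n,j}) where C(k,j) is the binomial coefficient and x_{n,0} = 1. Then a_{n,k} = O(n^{-2k}) as n → ∞, and moreover there exists B ≥ 0 such that a_{n,k} ≤ x_{n,k} + B/n^{2k+1} for all sufficiently large n.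 -/
open Filter

private lemma ev_shift {p : ℕ → Prop} (h : ∀ᶠ n in atTop, p n) :
    ∀ᶠ n in atTop, p (n + 1) :=
  (tendsto_add_atTop_nat 1).eventually h

/-- The moment recursion for ASG hitting times: if `x_{n,j} ≤ B_j/n^{2j}`, `a_{n,k}` is
bounded in `n` for each `k`, `x_{n,0} = 1`, and
`a_{n,k} ≤ x_{n,k} + ∑_{j=1}^k C(k,j) (2^j σ/(n-1+θ+σ)) x_{n,k-j} (a_{n+1,j} + a_{n,j})`,
then for every `k`, `a_{n,k} = O(n^{-2k})` and moreover there is `B ≥ 0` with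
`a_{n,k} ≤ x_{n,k} + B/n^{2k+1}` for all sufficiently large `n`. -/
theorem asg_moment_recursion_bound (σ θ : ℝ) (hσ : 0 ≤ σ) (hθ : 0 ≤ θ)
    (a x : ℕ → ℕ → ℝ) (B : ℕ → ℝ)
    (ha_nonneg : ∀ n k, 0 ≤ a n k) (hx_nonneg : ∀ n k, 0 ≤ x n k)
    (hx0 : ∀ n, x n 0 = 1)
    (hxB : ∀ j, ∀ n : ℕ, 2 ≤ n → x n j ≤ B j / (n : ℝ) ^ (2 * j))
    (ha_bdd : ∀ k, ∃ M : ℝ, ∀ n, a n k ≤ M)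
    (hrec : ∀ k, ∀ n : ℕ, 2 ≤ n →
      a n k ≤ x n k + ∑ j ∈ Finset.Icc 1 k,
        (k.choose j : ℝ) * (2 ^ j * σ / ((n : ℝ) - 1 + θ + σ)) * x n (k - j) *
          (a (n + 1) j + a n j)) :
    ∀ k : ℕ,
      (fun n : ℕ => a n k) =O[atTop] (fun n : ℕ => 1 / (n : ℝ) ^ (2 * k)) ∧
        ∃ Bk : ℝ, 0 ≤ Bk ∧ ∀ᶠ n : ℕ in atTop,
          a n k ≤ x n k + Bk / (n : ℝ) ^ (2 * k + 1) := by
  -- B j is nonnegative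
  have hB : ∀ j, 0 ≤ B j := by
    intro j
    have h1 : (0:ℝ) ≤ B j / ((2:ℕ) : ℝ) ^ (2 * j) :=
      (hx_nonneg 2 j).trans (hxB j 2 le_rfl)
    have h2 : (0:ℝ) < ((2:ℕ) : ℝ) ^ (2 * j) := by positivity
    rcases div_nonneg_iff.mp h1 with ⟨h, _⟩ | ⟨_, h⟩
    · exact h
    · linarith
  -- main inductive claim
  have key : ∀ k : ℕ, ∃ C : ℝ, 0 ≤ C ∧
      ∀ᶠ n : ℕ in atTop, a n k ≤ x n k + C / (n : ℝ) ^ (2 * k + 1) := by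
    intro k
    induction k using Nat.strong_induction_on with
    | _ k ih =>
    rcases Nat.eq_zero_or_pos k with rfl | hkpos
    · refine ⟨0, le_rfl, ?_⟩
      filter_upwards [eventually_ge_atTop 2] with n hn
      have := hrec 0 n hn
      simpa using this
    · -- rate bounds for j < k
      have hQ : ∀ j : ℕ, ∃ C : ℝ, 0 ≤ C ∧
          (j < k → ∀ᶠ n : ℕ in atTop, a n j ≤ C / (n : ℝ) ^ (2 * j)) := by
        intro j
        by_cases hj : j < k
        · obtain ⟨C, hC0, hC⟩ := ih j hj
          refine ⟨B j + C, by linarith [hB j], fun _ => ?_⟩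
          filter_upwards [hC, eventually_ge_atTop 2] with n hn h2
          have h2' : (2:ℝ) ≤ (n:ℝ) := by exact_mod_cast h2
          have hp : (0:ℝ) < (n:ℝ) ^ (2 * j) := by positivity
          have hstep : C / (n:ℝ) ^ (2 * j + 1) ≤ C / (n:ℝ) ^ (2 * j) := by
            apply div_le_div_of_nonneg_left hC0 hp
            exact pow_le_pow_right₀ (by linarith) (Nat.le_succ _)
          have hxj := hxB j n h2
          calc a n j ≤ x n j + C / (n:ℝ) ^ (2 * j + 1) := hn
            _ ≤ B j / (n:ℝ) ^ (2 * j) + C / (n:ℝ) ^ (2 * j) := by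
                exact add_le_add hxj hstep
            _ = (B j + C) / (n:ℝ) ^ (2 * j) := by rw [add_div]
        · exact ⟨0, le_rfl, fun h => absurd h hj⟩
      choose Cf hCf0 hCf using hQ
      -- core improvement step
      have core : ∀ m : ℕ, m ≤ 2 * k → ∀ C : ℝ, 0 ≤ C →
          (∀ᶠ n : ℕ in atTop, a n k ≤ C / (n : ℝ) ^ m) →
          ∃ E : ℝ, 0 ≤ E ∧
            ∀ᶠ n : ℕ in atTop, a n k ≤ x n k + E / (n : ℝ) ^ (m + 1) := by
        intro m hm C hC0 hC
        set C' : ℕ → ℝ := fun j => if j = k then C else Cf j with hC'def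
        have hC'0 : ∀ j, 0 ≤ C' j := by
          intro j
          by_cases h : j = k <;> simp [hC'def, h, hC0, hCf0 j]
        set e : ℕ → ℕ := fun j => if j = k then m else 2 * j with hedef
        set c : ℕ → ℝ := fun j =>
          (k.choose j : ℝ) * 2 ^ j * σ * 4 * B (k - j) * C' j with hcdef
        have hc0 : ∀ j, 0 ≤ c j := by
          intro j
          exact mul_nonneg (mul_nonneg (mul_nonneg (mul_nonneg
            (mul_nonneg (by positivity) (by positivity)) hσ) (by norm_num))
            (hB _)) (hC'0 j)
        -- per-index eventual bounds
        have hEv : ∀ j ∈ Finset.Icc 1 k, ∀ᶠ n : ℕ in atTop,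
            a n j ≤ C' j / (n : ℝ) ^ (e j) ∧
              a (n + 1) j ≤ C' j / (n : ℝ) ^ (e j) := by
          intro j hj
          obtain ⟨hj1, hjk⟩ := Finset.mem_Icc.mp hj
          have base : ∀ᶠ n : ℕ in atTop, a n j ≤ C' j / (n : ℝ) ^ (e j) := by
            rcases eq_or_lt_of_le hjk with rfl | hlt
            · simpa [hC'def, hedef] using hC
            · have := hCf j hlt
              simpa [hC'def, hedef, hlt.ne] using this
          have shift := ev_shift base
          filter_upwards [base, shift, eventually_ge_atTop 1] with n hb hs hn1
          refine ⟨hb, hs.trans ?_⟩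
          have hn1' : (1:ℝ) ≤ (n:ℝ) := by exact_mod_cast hn1
          have hp : (0:ℝ) < (n:ℝ) ^ (e j) := by positivity
          apply div_le_div_of_nonneg_left (hC'0 j) hp
          have : ((n:ℝ)) ^ (e j) ≤ ((n:ℝ) + 1) ^ (e j) :=
            pow_le_pow_left₀ (by linarith) (by linarith) _
          calc ((n:ℝ)) ^ (e j) ≤ ((n:ℝ) + 1) ^ (e j) := this
            _ = (((n + 1 : ℕ)):ℝ) ^ (e j) := by push_cast; ring
        have hAll : ∀ᶠ n : ℕ in atTop, ∀ j ∈ Finset.Icc 1 k,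
            a n j ≤ C' j / (n : ℝ) ^ (e j) ∧
              a (n + 1) j ≤ C' j / (n : ℝ) ^ (e j) :=
          (Filter.eventually_all_finset _).mpr hEv
        refine ⟨∑ j ∈ Finset.Icc 1 k, c j,
          Finset.sum_nonneg fun j _ => hc0 j, ?_⟩
        filter_upwards [hAll, eventually_ge_atTop 2] with n hAl hn2
        have hn2' : (2:ℝ) ≤ (n:ℝ) := by exact_mod_cast hn2
        have hn0 : (0:ℝ) < (n:ℝ) := by linarith
        have hd : (n:ℝ) / 2 ≤ (n:ℝ) - 1 + θ + σ := by linarith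
        have hd0 : (0:ℝ) < (n:ℝ) / 2 := by linarith
        have hsum : ∑ j ∈ Finset.Icc 1 k,
            (k.choose j : ℝ) * (2 ^ j * σ / ((n : ℝ) - 1 + θ + σ)) * x n (k - j) *
              (a (n + 1) j + a n j)
            ≤ ∑ j ∈ Finset.Icc 1 k, c j / (n : ℝ) ^ (m + 1) := by
          apply Finset.sum_le_sum
          intro j hj
          obtain ⟨hj1, hjk⟩ := Finset.mem_Icc.mp hj
          obtain ⟨hA1, hA2⟩ := hAl j hj
          have hs2 : a (n + 1) j + a n j ≤ 2 * (C' j / (n:ℝ) ^ (e j)) := by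
            linarith
          have hxj := hxB (k - j) n hn2
          have hfrac : 2 ^ j * σ / ((n:ℝ) - 1 + θ + σ) ≤ 2 ^ j * σ / ((n:ℝ) / 2) :=
            div_le_div_of_nonneg_left (mul_nonneg (by positivity) hσ) hd0 hd
          have h1 : (k.choose j : ℝ) * (2 ^ j * σ / ((n : ℝ) - 1 + θ + σ)) *
                x n (k - j) * (a (n + 1) j + a n j)
              ≤ (k.choose j : ℝ) * (2 ^ j * σ / ((n:ℝ) / 2)) *
                (B (k - j) / (n:ℝ) ^ (2 * (k - j))) * (2 * (C' j / (n:ℝ) ^ (e j))) := by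
            have f1 : (0:ℝ) ≤ (k.choose j : ℝ) := by positivity
            have f2 : (0:ℝ) ≤ 2 ^ j * σ / ((n:ℝ) - 1 + θ + σ) := by
              apply div_nonneg (mul_nonneg (by positivity) hσ); linarith
            have f4 : (0:ℝ) ≤ a (n + 1) j + a n j :=
              add_nonneg (ha_nonneg _ _) (ha_nonneg _ _)
            have g2 : (0:ℝ) ≤ 2 ^ j * σ / ((n:ℝ) / 2) := by
              apply div_nonneg (mul_nonneg (by positivity) hσ); linarith
            have g3 : (0:ℝ) ≤ B (k - j) / (n:ℝ) ^ (2 * (k - j)) := by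
              apply div_nonneg (hB _); positivity
            apply mul_le_mul
            · apply mul_le_mul
              · exact mul_le_mul le_rfl hfrac f2 f1
              · exact hxj
              · exact hx_nonneg _ _
              · exact mul_nonneg f1 g2
            · exact hs2
            · exact f4
            · exact mul_nonneg (mul_nonneg f1 g2) g3
          have h2 : (k.choose j : ℝ) * (2 ^ j * σ / ((n:ℝ) / 2)) *
                (B (k - j) / (n:ℝ) ^ (2 * (k - j))) * (2 * (C' j / (n:ℝ) ^ (e j)))
              = c j / (n:ℝ) ^ (1 + 2 * (k - j) + e j) := by
            have hpe : ((n:ℝ)) ^ (1 + 2 * (k - j) + e j)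
                = (n:ℝ) * (n:ℝ) ^ (2 * (k - j)) * (n:ℝ) ^ (e j) := by
              rw [pow_add, pow_add, pow_one]
            rw [hpe, hcdef]
            have hne : (n:ℝ) ≠ 0 := ne_of_gt hn0
            have hne1 : ((n:ℝ)) ^ (2 * (k - j)) ≠ 0 := by positivity
            have hne2 : ((n:ℝ)) ^ (e j) ≠ 0 := by positivity
            field_simp
            ring
          have h3 : c j / (n:ℝ) ^ (1 + 2 * (k - j) + e j) ≤ c j / (n:ℝ) ^ (m + 1) := by
            apply div_le_div_of_nonneg_left (hc0 j) (by positivity)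
            apply pow_le_pow_right₀ (by linarith)
            by_cases hjeq : j = k
            · subst hjeq; simp [hedef]
            · have : j < k := lt_of_le_of_ne hjk hjeq
              simp only [hedef, if_neg hjeq]
              omega
          calc (k.choose j : ℝ) * (2 ^ j * σ / ((n : ℝ) - 1 + θ + σ)) *
                x n (k - j) * (a (n + 1) j + a n j)
              ≤ (k.choose j : ℝ) * (2 ^ j * σ / ((n:ℝ) / 2)) *
                (B (k - j) / (n:ℝ) ^ (2 * (k - j))) * (2 * (C' j / (n:ℝ) ^ (e j))) := h1
            _ = c j / (n:ℝ) ^ (1 + 2 * (k - j) + e j) := h2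
            _ ≤ c j / (n:ℝ) ^ (m + 1) := h3
        calc a n k ≤ x n k + ∑ j ∈ Finset.Icc 1 k,
              (k.choose j : ℝ) * (2 ^ j * σ / ((n : ℝ) - 1 + θ + σ)) * x n (k - j) *
                (a (n + 1) j + a n j) := hrec k n hn2
          _ ≤ x n k + ∑ j ∈ Finset.Icc 1 k, c j / (n : ℝ) ^ (m + 1) := by
              linarith
          _ = x n k + (∑ j ∈ Finset.Icc 1 k, c j) / (n : ℝ) ^ (m + 1) := by
              rw [Finset.sum_div]
      -- bootstrap
      have boot : ∀ m : ℕ, m ≤ 2 * k → ∃ C : ℝ, 0 ≤ C ∧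
          ∀ᶠ n : ℕ in atTop, a n k ≤ C / (n : ℝ) ^ m := by
        intro m
        induction m with
        | zero =>
          intro _
          obtain ⟨M, hM⟩ := ha_bdd k
          refine ⟨max M 0, le_max_right _ _, Eventually.of_forall fun n => ?_⟩
          simpa using (hM n).trans (le_max_left _ _)
        | succ m ihm =>
          intro hm1
          obtain ⟨C, hC0, hC⟩ := ihm (by omega)
          obtain ⟨E, hE0, hE⟩ := core m (by omega) C hC0 hC
          refine ⟨B k + E, by linarith [hB k], ?_⟩
          filter_upwards [hE, eventually_ge_atTop 2] with n hn h2
          have h2' : (2:ℝ) ≤ (n:ℝ) := by exact_mod_cast h2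
          have hxk := hxB k n h2
          have hstep : B k / (n:ℝ) ^ (2 * k) ≤ B k / (n:ℝ) ^ (m + 1) := by
            apply div_le_div_of_nonneg_left (hB k) (by positivity)
            exact pow_le_pow_right₀ (by linarith) hm1
          calc a n k ≤ x n k + E / (n:ℝ) ^ (m + 1) := hn
            _ ≤ B k / (n:ℝ) ^ (m + 1) + E / (n:ℝ) ^ (m + 1) := by
                have := hxk.trans hstep
                linarith
            _ = (B k + E) / (n:ℝ) ^ (m + 1) := by rw [add_div]
      obtain ⟨C, hC0, hC⟩ := boot (2 * k) le_rfl
      obtain ⟨E, hE0, hE⟩ := core (2 * k) le_rfl C hC0 hC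
      exact ⟨E, hE0, hE⟩
  -- conclude
  intro k
  obtain ⟨C, hC0, hC⟩ := key k
  constructor
  · rw [Asymptotics.isBigO_iff]
    refine ⟨B k + C, ?_⟩
    filter_upwards [hC, eventually_ge_atTop 2] with n hn h2
    have h2' : (2:ℝ) ≤ (n:ℝ) := by exact_mod_cast h2
    have hp : (0:ℝ) < (n:ℝ) ^ (2 * k) := by positivity
    have hxk := hxB k n h2
    have hstep : C / (n:ℝ) ^ (2 * k + 1) ≤ C / (n:ℝ) ^ (2 * k) := by
      apply div_le_div_of_nonneg_left hC0 hp
      exact pow_le_pow_right₀ (by linarith) (Nat.le_succ _)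
    rw [Real.norm_eq_abs, Real.norm_eq_abs, abs_of_nonneg (ha_nonneg n k),
      abs_of_nonneg (by positivity : (0:ℝ) ≤ 1 / (n:ℝ) ^ (2 * k))]
    calc a n k ≤ x n k + C / (n:ℝ) ^ (2 * k + 1) := hn
      _ ≤ B k / (n:ℝ) ^ (2 * k) + C / (n:ℝ) ^ (2 * k) := add_le_add hxk hstep
      _ = (B k + C) * (1 / (n:ℝ) ^ (2 * k)) := by field_simp
  · exact ⟨C, hC0, hC⟩
end

section
/- Let M be a square-integrable càdlàg martingale with M_0 = 0 satisfying E[M_t²] ≤ C·t for all t ≤ T, and define L_t := ∫_0^t u dM_u and Y_t := −L_t/t for t > 0, Y_0 = 0. If E[[L]_t] ≤ (C/3)t³ for t ≤ T, then E[Y_t²] ≤ (C/3)·t for all 0 < t ≤ T, and Y satisfies Y_t = −∫_0^t (Y_s/s) ds − M_t. -/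
open MeasureTheory Set Filter
open scoped ENNReal Topology

/-!
For `t > 0` put `G_t = ∫_0^t M_s ds`, so that `Y_t = G_t / t - M_t`; the second-moment bound is
just `E[Y_t²] = E[L_t²] / t²`. Since the path of `M` is right-continuous, `G` has right
derivative `M`, hence `-G_s / s` has right derivative `Y_s / s` on `(0, ∞)`, and it tends to
`-M_0 = 0` as `s → 0+`. The fundamental theorem of calculus on `[0, t]` then gives the identity,
provided `s ↦ Y_s / s` is integrable near `0`. That holds for almost every path: by
Cauchy–Schwarz `E|Y_s| ≤ √(C s / 3)`, so by Tonelli `E ∫_0^T |Y_s| / s ds ≤ ∫_0^T √(C / (3 s)) ds`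
is finite. Tonelli needs joint measurability of `(s, ω) ↦ M_s(ω)`, which follows from
right-continuity by approximating `s` from the right on finer and finer grids.
-/

theorem tendsto_ceil_mul_div_nhdsGE (t : ℝ) :
    Tendsto (fun n : ℕ => (⌈t * (n + 1)⌉ : ℝ) / (n + 1)) atTop (𝓝[≥] t) := by
  have h_ge : ∀ n : ℕ, t ≤ (⌈t * (n + 1)⌉ : ℝ) / (n + 1) := fun n => by
    rw [le_div_iff₀ (by positivity)]
    exact Int.le_ceil _
  have h_le : ∀ n : ℕ, (⌈t * (n + 1)⌉ : ℝ) / (n + 1) ≤ t + 1 / (n + 1) := fun n => by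
    rw [div_le_iff₀ (by positivity), add_mul, one_div_mul_cancel (by positivity)]
    exact (Int.ceil_lt_add_one _).le
  have h_lim : Tendsto (fun n : ℕ => t + 1 / ((n : ℝ) + 1)) atTop (𝓝 t) := by
    simpa using tendsto_one_div_add_atTop_nhds_zero_nat.const_add t
  exact tendsto_nhdsWithin_of_tendsto_nhds_of_eventually_within _
    (tendsto_of_tendsto_of_tendsto_of_le_of_le tendsto_const_nhds h_lim h_ge h_le)
    (Eventually.of_forall h_ge)

theorem measurable_uncurry_of_continuousWithinAt_Ici {Ω E : Type*} [MeasurableSpace Ω]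
    [TopologicalSpace E] [TopologicalSpace.PseudoMetrizableSpace E] [MeasurableSpace E]
    [BorelSpace E]
    {X : ℝ → Ω → E} (hrc : ∀ ω t, ContinuousWithinAt (fun s => X s ω) (Ici t) t)
    (hX : ∀ t, Measurable (X t)) :
    Measurable (Function.uncurry X) := by
  refine measurable_of_tendsto_metrizable
    (f := fun (n : ℕ) (p : ℝ × Ω) => X ((⌈p.1 * (n + 1)⌉ : ℝ) / (n + 1)) p.2) (fun n => ?_) ?_
  · have h_grid : Measurable fun q : Ω × ℤ => X ((q.2 : ℝ) / (n + 1)) q.1 :=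
      measurable_from_prod_countable_left fun k : ℤ => hX ((k : ℝ) / (n + 1))
    exact h_grid.comp (measurable_snd.prodMk (Int.measurable_ceil.comp
      (measurable_fst.mul_const _)))
  · exact tendsto_pi_nhds.2 fun p => (hrc p.2 p.1).tendsto.comp (tendsto_ceil_mul_div_nhdsGE p.1)

section Cadlag

variable {E : Type*} [NormedAddCommGroup E] {f : ℝ → E}

theorem isBoundedUnder_norm_nhds_of_cadlag {x : ℝ} (hrc : ContinuousWithinAt f (Ici x) x)
    (hll : ∃ l, Tendsto f (𝓝[<] x) (𝓝 l)) :
    IsBoundedUnder (· ≤ ·) (𝓝 x) fun y => ‖f y‖ := by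
  obtain ⟨l, hl⟩ := hll
  rw [← nhdsLT_sup_nhdsGE, IsBoundedUnder, map_sup]
  exact isBounded_sup hl.norm.isBoundedUnder_le hrc.tendsto.norm.isBoundedUnder_le

theorem IsCompact.bddAbove_image_norm_of_cadlag {K : Set ℝ} (hK : IsCompact K)
    (hrc : ∀ x, ContinuousWithinAt f (Ici x) x) (hll : ∀ x, ∃ l, Tendsto f (𝓝[<] x) (𝓝 l)) :
    BddAbove ((fun y => ‖f y‖) '' K) := by
  refine hK.induction_on (p := fun s => BddAbove ((fun y => ‖f y‖) '' s)) (by simp)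
    (fun s t hst ht => ht.mono (image_mono hst))
    (fun s t hs ht => by rw [image_union]; exact hs.union ht) fun x _ => ?_
  obtain ⟨b, hb⟩ := isBoundedUnder_norm_nhds_of_cadlag (hrc x) (hll x)
  exact ⟨_, mem_nhdsWithin_of_mem_nhds hb, b, by rintro _ ⟨y, hy, rfl⟩; exact hy⟩

theorem intervalIntegrable_of_cadlag (hf : AEStronglyMeasurable f)
    (hrc : ∀ x, ContinuousWithinAt f (Ici x) x) (hll : ∀ x, ∃ l, Tendsto f (𝓝[<] x) (𝓝 l))
    (a b : ℝ) : IntervalIntegrable f volume a b := by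
  obtain ⟨K, hK⟩ := (isCompact_uIcc (a := a) (b := b)).bddAbove_image_norm_of_cadlag hrc hll
  rw [intervalIntegrable_iff]
  refine Measure.integrableOn_of_bounded (M := K) measure_Ioc_lt_top.ne hf ?_
  filter_upwards [ae_restrict_mem measurableSet_uIoc] with x hx
  exact hK ⟨x, uIoc_subset_uIcc hx, rfl⟩

end Cadlag

theorem measurable_uncurry_intervalIntegral {Ω : Type*} [MeasurableSpace Ω] {X : ℝ → Ω → ℝ}
    (hX : Measurable (Function.uncurry X))
    (hint : ∀ ω a b, IntervalIntegrable (X · ω) volume a b) (a : ℝ) :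
    Measurable (Function.uncurry fun s ω => ∫ u in a..s, X u ω) := by
  refine (stronglyMeasurable_uncurry_of_continuous_of_stronglyMeasurable
    (fun ω => intervalIntegral.continuous_primitive (hint ω) a) fun s => ?_).measurable
  simp_rw [intervalIntegral.intervalIntegral_eq_integral_uIoc]
  exact ((hX.comp measurable_swap).stronglyMeasurable.integral_prod_right'
    (ν := volume.restrict (uIoc a s))).const_smul (if a ≤ s then (1 : ℝ) else -1)

theorem sq_lintegral_le_measure_univ_mul_lintegral_sq {α : Type*} [MeasurableSpace α]
    {ν : Measure α} {f : α → ℝ≥0∞} (hf : AEMeasurable f ν) :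
    (∫⁻ x, f x ∂ν) ^ 2 ≤ ν univ * ∫⁻ x, f x ^ 2 ∂ν := by
  have h := ENNReal.lintegral_mul_le_Lp_mul_Lq ν Real.HolderConjugate.two_two hf
    aemeasurable_const (g := 1)
  simp only [Pi.mul_apply, Pi.one_apply, mul_one, ENNReal.one_rpow, lintegral_const,
    one_mul] at h
  calc (∫⁻ x, f x ∂ν) ^ 2
      ≤ ((∫⁻ x, f x ^ (2 : ℝ) ∂ν) ^ (1 / 2 : ℝ) * ν univ ^ (1 / 2 : ℝ)) ^ 2 := by gcongr
    _ = ν univ * ∫⁻ x, f x ^ 2 ∂ν := by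
      rw [mul_pow, ← ENNReal.rpow_natCast, ← ENNReal.rpow_natCast (_ ^ _), ← ENNReal.rpow_mul,
        ← ENNReal.rpow_mul]
      norm_num [mul_comm]

theorem lintegral_enorm_sq_eq_ofReal {Ω : Type*} [MeasurableSpace Ω] {μ : Measure Ω}
    {X : Ω → ℝ} (hX2 : Integrable (fun ω => X ω ^ 2) μ) :
    ∫⁻ ω, ‖X ω‖ₑ ^ 2 ∂μ = ENNReal.ofReal (∫ ω, X ω ^ 2 ∂μ) := by
  rw [ofReal_integral_eq_lintegral_ofReal hX2 (Eventually.of_forall fun ω => sq_nonneg _)]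
  congr 1 with ω
  rw [← sq_abs, ENNReal.ofReal_pow (abs_nonneg _), Real.enorm_eq_ofReal_abs]

theorem lintegral_enorm_le_ofReal_sqrt_integral_sq {Ω : Type*} [MeasurableSpace Ω]
    {μ : Measure Ω} [IsProbabilityMeasure μ] {X : Ω → ℝ} (hX : AEMeasurable X μ)
    (hX2 : Integrable (fun ω => X ω ^ 2) μ) :
    ∫⁻ ω, ‖X ω‖ₑ ∂μ ≤ ENNReal.ofReal √(∫ ω, X ω ^ 2 ∂μ) := by
  rw [← ENNReal.pow_le_pow_left_iff two_ne_zero, ← ENNReal.ofReal_pow (Real.sqrt_nonneg _),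
    Real.sq_sqrt (integral_nonneg fun ω => sq_nonneg _), ← lintegral_enorm_sq_eq_ofReal hX2]
  simpa using sq_lintegral_le_measure_univ_mul_lintegral_sq hX.enorm (ν := μ)

theorem memLp_two_integral_of_lintegral_lintegral_lt_top {α Ω : Type*} [MeasurableSpace α]
    [MeasurableSpace Ω] {ν : Measure α} [IsFiniteMeasure ν] {μ : Measure Ω} [SFinite μ]
    {F : α → Ω → ℝ} (hF : Measurable (Function.uncurry F))
    (hfin : ∫⁻ x, ∫⁻ ω, ‖F x ω‖ₑ ^ 2 ∂μ ∂ν < ∞) :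
    MemLp (fun ω => ∫ x, F x ω ∂ν) 2 μ := by
  have hF' : Measurable fun q : Ω × α => F q.2 q.1 := hF.comp measurable_swap
  refine ⟨hF'.stronglyMeasurable.integral_prod_right'.aestronglyMeasurable, ?_⟩
  rw [eLpNorm_lt_top_iff_lintegral_rpow_enorm_lt_top two_ne_zero ENNReal.ofNat_ne_top]
  calc ∫⁻ ω, ‖∫ x, F x ω ∂ν‖ₑ ^ (2 : ℝ≥0∞).toReal ∂μ
      ≤ ∫⁻ ω, ν univ * ∫⁻ x, ‖F x ω‖ₑ ^ 2 ∂ν ∂μ := lintegral_mono fun ω => by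
        rw [ENNReal.toReal_ofNat, ENNReal.rpow_two]
        exact (pow_le_pow_left' (enorm_integral_le_lintegral_enorm _) 2).trans
          (sq_lintegral_le_measure_univ_mul_lintegral_sq
            (hF.comp (measurable_id.prodMk measurable_const)).enorm.aemeasurable)
    _ = ν univ * ∫⁻ x, ∫⁻ ω, ‖F x ω‖ₑ ^ 2 ∂μ ∂ν := by
      rw [lintegral_const_mul' _ _ (measure_ne_top _ _),
        lintegral_lintegral_swap (hF'.enorm.pow_const 2).aemeasurable]
    _ < ∞ := ENNReal.mul_lt_top (measure_lt_top _ _) hfin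

theorem memLp_two_intervalIntegral_of_integral_sq_le {Ω : Type*} [MeasurableSpace Ω]
    {μ : Measure Ω} [SFinite μ] {X : ℝ → Ω → ℝ} (hX : Measurable (Function.uncurry X)) {s K : ℝ}
    (hs : 0 ≤ s) (hX2 : ∀ u ∈ Ioc 0 s, Integrable (fun ω => X u ω ^ 2) μ)
    (hbound : ∀ u ∈ Ioc 0 s, ∫ ω, X u ω ^ 2 ∂μ ≤ K) :
    MemLp (fun ω => ∫ u in 0..s, X u ω) 2 μ := by
  have : IsFiniteMeasure (volume.restrict (Ioc 0 s)) :=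
    isFiniteMeasure_restrict.2 measure_Ioc_lt_top.ne
  simp_rw [intervalIntegral.integral_of_le hs]
  refine memLp_two_integral_of_lintegral_lintegral_lt_top hX ?_
  calc ∫⁻ u in Ioc 0 s, ∫⁻ ω, ‖X u ω‖ₑ ^ 2 ∂μ
      ≤ ∫⁻ u in Ioc 0 s, ENNReal.ofReal K := setLIntegral_mono' measurableSet_Ioc fun u hu => by
        rw [lintegral_enorm_sq_eq_ofReal (hX2 u hu)]
        exact ENNReal.ofReal_le_ofReal (hbound u hu)
    _ < ∞ := by
      rw [setLIntegral_const]
      exact ENNReal.mul_lt_top ENNReal.ofReal_lt_top measure_Ioc_lt_top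

theorem integrableOn_sqrt_mul_div_self (c T : ℝ) :
    IntegrableOn (fun s => √(c * s) / s) (Ioc 0 T) := by
  have h := ((intervalIntegral.intervalIntegrable_rpow' (r := -(1 / 2)) (by norm_num)).const_mul
    √c).def'.mono_set (Ioc_subset_uIoc (a := 0) (b := T))
  refine h.congr_fun (fun s hs_mem => ?_) measurableSet_Ioc
  have hs : 0 < s := hs_mem.1
  dsimp only
  rw [Real.rpow_neg hs.le, ← Real.sqrt_eq_rpow, Real.sqrt_mul' c hs.le, mul_div_assoc,
    Real.sqrt_div_self', one_div]

theorem ae_integrableOn_div_of_lintegral_enorm_le {Ω : Type*} [MeasurableSpace Ω]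
    {μ : Measure Ω} [SFinite μ] {Y : ℝ → Ω → ℝ} {T c : ℝ} (hY : Measurable (Function.uncurry Y))
    (hbound : ∀ s ∈ Ioc 0 T, ∫⁻ ω, ‖Y s ω‖ₑ ∂μ ≤ ENNReal.ofReal √(c * s)) :
    ∀ᵐ ω ∂μ, IntegrableOn (fun s => Y s ω / s) (Ioc 0 T) := by
  have hY' : Measurable fun q : Ω × ℝ => Y q.2 q.1 / q.2 :=
    (hY.comp measurable_swap).div measurable_snd
  have h_fin : ∫⁻ ω, (∫⁻ s in Ioc 0 T, ‖Y s ω / s‖ₑ) ∂μ < ∞ := by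
    rw [lintegral_lintegral_swap hY'.enorm.aemeasurable]
    calc ∫⁻ s in Ioc 0 T, ∫⁻ ω, ‖Y s ω / s‖ₑ ∂μ
        = ∫⁻ s in Ioc 0 T, (∫⁻ ω, ‖Y s ω‖ₑ ∂μ) * ‖s⁻¹‖ₑ := by
          simp only [div_eq_mul_inv, enorm_mul]
          congr 1 with s
          exact lintegral_mul_const _ (hY.comp (measurable_const.prodMk measurable_id)).enorm
      _ ≤ ∫⁻ s in Ioc 0 T, ‖√(c * s) / s‖ₑ := by
          refine setLIntegral_mono' measurableSet_Ioc fun s hs => ?_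
          rw [div_eq_mul_inv, enorm_mul, Real.enorm_of_nonneg (Real.sqrt_nonneg _)]
          gcongr
          exact hbound s hs
      _ < ∞ := (integrableOn_sqrt_mul_div_self c T).2
  filter_upwards [ae_lt_top' (hY'.enorm.lintegral_prod_right').aemeasurable h_fin.ne] with ω hω
  exact ⟨(hY.comp (measurable_id.prodMk measurable_const)).div measurable_id
    |>.aestronglyMeasurable, hω⟩

theorem ae_integrableOn_div_self_of_eq_intervalIntegral_div_sub {Ω : Type*}
    [MeasurableSpace Ω] {μ : Measure Ω} [IsProbabilityMeasure μ] {M Y : ℝ → Ω → ℝ} {T c K : ℝ}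
    (hM : Measurable (Function.uncurry M))
    (hM_int : ∀ ω a b, IntervalIntegrable (M · ω) volume a b)
    (hM2 : ∀ u ∈ Ioc 0 T, Integrable (fun ω => M u ω ^ 2) μ)
    (hM_bound : ∀ u ∈ Ioc 0 T, ∫ ω, M u ω ^ 2 ∂μ ≤ K)
    (hY : ∀ s, 0 < s → ∀ ω, Y s ω = (∫ u in 0..s, M u ω) / s - M s ω)
    (hY_bound : ∀ s ∈ Ioc 0 T, ∫ ω, Y s ω ^ 2 ∂μ ≤ c * s) :
    ∀ᵐ ω ∂μ, IntegrableOn (fun s => Y s ω / s) (Ioc 0 T) := by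
  -- `Y` itself need not be jointly measurable; `Z` is, and agrees with `Y` for `s > 0`
  set Z : ℝ → Ω → ℝ := fun s ω => (∫ u in 0..s, M u ω) / s - M s ω with hZ
  have hZ_meas : Measurable (Function.uncurry Z) :=
    ((measurable_uncurry_intervalIntegral hM hM_int 0).div measurable_fst).sub hM
  have hZ_meas_left (s : ℝ) : Measurable (Z s) := hZ_meas.comp measurable_prodMk_left
  have hZ_sq : ∀ s ∈ Ioc 0 T, Integrable (fun ω => Z s ω ^ 2) μ := by
    intro s hs
    have hMs : MemLp (M s) 2 μ :=
      (memLp_two_iff_integrable_sq (hM.comp measurable_prodMk_left).aestronglyMeasurable).2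
        (hM2 s hs)
    have hG := memLp_two_intervalIntegral_of_integral_sq_le hM hs.1.le
      (fun u hu => hM2 u ⟨hu.1, hu.2.trans hs.2⟩) fun u hu => hM_bound u ⟨hu.1, hu.2.trans hs.2⟩
    refine (memLp_two_iff_integrable_sq (hZ_meas_left s).aestronglyMeasurable).1 ?_
    simp only [hZ, div_eq_mul_inv]
    exact (hG.mul_const s⁻¹).sub hMs
  have hZ_L1 : ∀ s ∈ Ioc 0 T, ∫⁻ ω, ‖Z s ω‖ₑ ∂μ ≤ ENNReal.ofReal √(c * s) := by
    intro s hs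
    refine (lintegral_enorm_le_ofReal_sqrt_integral_sq
      (hZ_meas_left s).aemeasurable (hZ_sq s hs)).trans ?_
    simp_rw [hZ, ← hY s hs.1]
    gcongr
    exact hY_bound s hs
  filter_upwards [ae_integrableOn_div_of_lintegral_enorm_le hZ_meas hZ_L1] with ω hω
  exact hω.congr_fun (fun s hs => by rw [hY s hs.1]) measurableSet_Ioc

theorem intervalIntegrable_div_self_of_integrableOn_Ioc {m y : ℝ → ℝ} {T : ℝ} (hT : 0 < T)
    (hm : ∀ a b, IntervalIntegrable m volume a b)
    (hy : ∀ s, 0 < s → y s = (∫ u in 0..s, m u) / s - m s)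
    (hy_int : IntegrableOn (fun s => y s / s) (Ioc 0 T)) {t : ℝ} (ht : 0 ≤ t) :
    IntervalIntegrable (fun s => y s / s) volume 0 t := by
  rcases le_total t T with htT | hTt
  · exact (intervalIntegrable_iff_integrableOn_Ioc_of_le ht).2
      (hy_int.mono_set (Ioc_subset_Ioc_right htT))
  have h_pos : ∀ s ∈ uIcc T t, 0 < s := fun s hs => hT.trans_le (uIcc_of_le hTt ▸ hs).1
  have h_tail : IntervalIntegrable (fun s => ((∫ u in 0..s, m u) / s - m s) * s⁻¹) volume T t :=
    ((ContinuousOn.intervalIntegrable fun s hs =>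
      ((intervalIntegral.continuous_primitive hm 0).continuousAt.div continuousAt_id
        (h_pos s hs).ne').continuousWithinAt).sub (hm T t)).mul_continuousOn
      (continuousOn_inv₀.mono fun s hs => (h_pos s hs).ne')
  refine ((intervalIntegrable_iff_integrableOn_Ioc_of_le hT.le).2 hy_int).trans
    (h_tail.congr ?_)
  intro s hs
  rw [uIoc_of_le hTt] at hs
  simp only [div_eq_mul_inv, hy s (hT.trans hs.1)]

theorem eq_neg_integral_div_self_sub {m y : ℝ → ℝ} {t : ℝ} (ht : 0 ≤ t)
    (hm : ∀ a b, IntervalIntegrable m volume a b) (hm_rc : ∀ s, ContinuousWithinAt m (Ici s) s)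
    (hm0 : m 0 = 0) (hy0 : y 0 = 0) (hy : ∀ s, 0 < s → y s = (∫ u in 0..s, m u) / s - m s)
    (hy_int : IntervalIntegrable (fun s => y s / s) volume 0 t) :
    y t = -(∫ s in 0..t, y s / s) - m t := by
  set g : ℝ → ℝ := fun s => ∫ u in 0..s, m u
  have hg_deriv : ∀ x, HasDerivWithinAt g (m x) (Ici x) x := fun x =>
    intervalIntegral.integral_hasDerivWithinAt_right (hm 0 x)
      ⟨Ioc x (x + 1), Ioc_mem_nhdsGT (lt_add_one x), (hm x (x + 1)).1.aestronglyMeasurable⟩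
      ((hm_rc x).mono Ioi_subset_Ici_self)
  have hg0 : g 0 = 0 := intervalIntegral.integral_same
  -- `g s / s → g'(0) = m 0 = 0`, and `0 / 0 = 0` makes the quotient continuous at `0`
  have h_cont_zero : ContinuousWithinAt (fun s => -g s / s) (Ici 0) 0 := by
    have h := (hasDerivWithinAt_iff_tendsto_slope.1 (hg_deriv 0)).neg
    rw [hm0, neg_zero] at h
    refine continuousWithinAt_sdiff_self.1 ?_
    show Tendsto _ _ (𝓝 (-g 0 / 0))
    rw [div_zero]
    refine h.congr fun s => ?_
    simp [slope_def_field, hg0, neg_div]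
  have h_cont : ContinuousOn (fun s => -g s / s) (Icc 0 t) := by
    intro x hx
    rcases hx.1.eq_or_lt with rfl | hx0
    · exact h_cont_zero.mono Icc_subset_Ici_self
    · exact ((intervalIntegral.continuous_primitive hm 0).neg.continuousAt.div continuousAt_id
        hx0.ne').continuousWithinAt
  have h_deriv : ∀ x ∈ Ioo 0 t, HasDerivWithinAt (fun s => -g s / s) (y x / x) (Ioi x) x := by
    intro x hx
    refine (((hg_deriv x).mono Ioi_subset_Ici_self).neg.div (hasDerivWithinAt_id x _)
      hx.1.ne').congr_deriv ?_
    rw [hy x hx.1]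
    simp only [id, Pi.neg_apply, g]
    have hx0 : x ≠ 0 := hx.1.ne'
    field_simp
    ring
  rw [intervalIntegral.integral_eq_sub_of_hasDeriv_right_of_le ht h_cont h_deriv hy_int]
  rcases ht.eq_or_lt with rfl | ht
  · simp [hy0, hm0]
  · rw [hy t ht]
    simp [g]
    ring

/-- For a square-integrable càdlàg martingale `M` with `M_0 = 0` and `E[M_t²] ≤ Ct` for
`t ≤ T`, set `L_t = ∫_0^t u dM_u` (realised pathwise via integration by parts:
`L_t = t M_t - ∫_0^t M_s ds`) and `Y_t = -L_t/t`, `Y_0 = 0`. If `E[[L]_t] ≤ (C/3)t³`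
for `t ≤ T` (expressed via `E[L_t²] = E[[L]_t]`), then `E[Y_t²] ≤ (C/3)t` for
`0 < t ≤ T` and `Y_t = -∫_0^t (Y_s/s) ds - M_t`. -/
theorem martingale_weighted_integral_process
    {Ω : Type*} {m0 : MeasurableSpace Ω} (μ : Measure Ω) [IsProbabilityMeasure μ]
    (ℱ : Filtration ℝ m0) (M : ℝ → Ω → ℝ) (T C : ℝ) (hT : 0 < T) (hC : 0 ≤ C)
    (hmart : Martingale M ℱ μ)
    (hM0 : ∀ ω, M 0 ω = 0)
    -- càdlàg paths
    (hM_rc : ∀ ω, ∀ t : ℝ, ContinuousWithinAt (fun s => M s ω) (Ici t) t)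
    (hM_ll : ∀ ω, ∀ t : ℝ, ∃ l : ℝ, Tendsto (fun s => M s ω) (nhdsWithin t (Iio t)) (nhds l))
    (hMsq : ∀ t : ℝ, 0 ≤ t → Integrable (fun ω => M t ω ^ 2) μ)
    (hMbound : ∀ t : ℝ, 0 ≤ t → t ≤ T → (∫ ω, M t ω ^ 2 ∂μ) ≤ C * t)
    (L : ℝ → Ω → ℝ)
    -- L_t = ∫_0^t u dM_u, realised via integration by parts
    (hLdef : ∀ t : ℝ, 0 ≤ t → ∀ ω, L t ω = t * M t ω - ∫ s in (0 : ℝ)..t, M s ω)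
    -- E[[L]_t] ≤ (C/3) t³, using E[L_t²] = E[[L]_t]
    (hLquad : ∀ t : ℝ, 0 ≤ t → t ≤ T → (∫ ω, L t ω ^ 2 ∂μ) ≤ C / 3 * t ^ 3)
    (Y : ℝ → Ω → ℝ)
    (hY0 : ∀ ω, Y 0 ω = 0)
    (hYdef : ∀ t : ℝ, 0 < t → ∀ ω, Y t ω = -(L t ω) / t) :
    (∀ t : ℝ, 0 < t → t ≤ T → (∫ ω, Y t ω ^ 2 ∂μ) ≤ C / 3 * t) ∧
      ∀ᵐ ω ∂μ, ∀ t : ℝ, 0 ≤ t →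
        Y t ω = -(∫ s in (0 : ℝ)..t, Y s ω / s) - M t ω := by
  have hY_sq_le : ∀ t : ℝ, 0 < t → t ≤ T → (∫ ω, Y t ω ^ 2 ∂μ) ≤ C / 3 * t := by
    intro t ht htT
    calc ∫ ω, Y t ω ^ 2 ∂μ = (∫ ω, L t ω ^ 2 ∂μ) / t ^ 2 := by
          rw [← integral_div]
          simp_rw [hYdef t ht, div_pow, neg_sq]
      _ ≤ C / 3 * t ^ 3 / t ^ 2 := by gcongr; exact hLquad t ht.le htT
      _ = C / 3 * t := by field_simp
  refine ⟨hY_sq_le, ?_⟩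
  have hY_eq : ∀ s, 0 < s → ∀ ω, Y s ω = (∫ u in 0..s, M u ω) / s - M s ω := by
    intro s hs ω
    rw [hYdef s hs, hLdef s hs.le]
    field_simp
    ring
  have hM_joint := measurable_uncurry_of_continuousWithinAt_Ici hM_rc fun t =>
    ((hmart.stronglyAdapted t).mono (ℱ.le t)).measurable
  have hM_int : ∀ ω a b, IntervalIntegrable (M · ω) volume a b := fun ω =>
    intervalIntegrable_of_cadlag (hM_joint.comp measurable_prodMk_right).aestronglyMeasurable
      (hM_rc ω) (hM_ll ω)
  have h_ae := ae_integrableOn_div_self_of_eq_intervalIntegral_div_sub hM_joint hM_int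
    (fun u hu => hMsq u hu.1.le)
    (fun u hu => (hMbound u hu.1.le hu.2).trans (mul_le_mul_of_nonneg_left hu.2 hC)) hY_eq
    fun s hs => hY_sq_le s hs.1 hs.2
  filter_upwards [h_ae] with ω hω t ht
  exact eq_neg_integral_div_self_sub ht (hM_int ω) (hM_rc ω) (hM0 ω) (hY0 ω) (hY_eq · · ω)
    (intervalIntegrable_div_self_of_integrableOn_Ioc hT (hM_int ω) (hY_eq · · ω) hω ht)
end
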